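/- arXiv:2209.00488 — 5 statements merged into one kernel-verified Lean document; each statement's English description precedes it below -/
import Mathlib

section
/- The symmetric pairing ⟨p,q⟩ = Σ_{i=0}^{d} (-1)^i binom(d,i)^{-1} p_i q_{d-i} on pairs of polynomials of degree at most d is SL(2,ℤ)-invariant: for all γ in SL(2,ℤ) and polynomials p, q of degree at most d, ⟨γ.p, γ.q⟩ = ⟨p, q⟩, where γ acts by (sym^d)(γ)p = (-cX+a)^d p((dX-b)/(-cX+a)) for γ = (a b; c d). -/
/-
Both `pairing d` and `symAct d γ` are (bi)linear, so it suffices to check invariance on the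
powers `(X + s)^d`, which span the polynomials of degree at most `d`: a linear functional
vanishing on them vanishes on every `X^k`, `k ≤ d`, because `L ((X + s)^d)` is a polynomial in
`s` with coefficients `choose d k • L (X^k)`. On powers of linear forms everything is explicit:
`symAct` sends `(uX + v)^d` to `(u'X + v')^d` with `(u', v') = (u, v)` transformed by `γ`, and
`⟨(uX + v)^d, (u'X + v')^d⟩ = (v u' - u v')^d` is a `d`-th power of a determinant, unchanged
because `det γ = 1`.
-/

open Polynomial Finset MeasureTheory

abbrev SL2Z := Matrix.SpecialLinearGroup (Fin 2) ℤ

noncomputable def symAct (d : ℕ) (γ : SL2Z) (p : Polynomial ℂ) : Polynomial ℂ :=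
  ∑ i ∈ Finset.range (d + 1), Polynomial.C (p.coeff i) *
    ((Polynomial.C ((γ.1 1 1 : ℤ) : ℂ) * Polynomial.X - Polynomial.C ((γ.1 0 1 : ℤ) : ℂ)) ^ i *
     (Polynomial.C ((γ.1 0 0 : ℤ) : ℂ) - Polynomial.C ((γ.1 1 0 : ℤ) : ℂ) * Polynomial.X) ^ (d - i))

noncomputable def pairing (d : ℕ) (p q : Polynomial ℂ) : ℂ :=
  ∑ i ∈ Finset.range (d + 1), (-1 : ℂ) ^ i * ((d.choose i : ℂ))⁻¹ * p.coeff i * q.coeff (d - i)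

def IsParabolicCocycle (d : ℕ) (φ : SL2Z → Polynomial ℂ) : Prop :=
  (∀ γ, (φ γ).natDegree ≤ d) ∧
  (∀ γ₁ γ₂, φ (γ₁ * γ₂) = symAct d γ₁ (φ γ₂) + φ γ₁) ∧
  φ ModularGroup.T = 0 ∧ φ (-1) = 0

namespace Polynomial

variable {R : Type*} [CommSemiring R]

theorem C_mul_X_add_C_pow_eq_sum (u v : R) (d : ℕ) :
    (C u * X + C v) ^ d =
      ∑ k ∈ range (d + 1), C (d.choose k * u ^ k * v ^ (d - k)) * X ^ k := by
  rw [add_pow]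
  refine Finset.sum_congr rfl fun k _ => ?_
  rw [C_mul, C_mul, C_pow, C_pow, C_eq_natCast]
  ring

theorem coeff_C_mul_X_add_C_pow (u v : R) {d k : ℕ} (hk : k ≤ d) :
    ((C u * X + C v) ^ d).coeff k = d.choose k * u ^ k * v ^ (d - k) := by
  rw [C_mul_X_add_C_pow_eq_sum, finsetSum_coeff]
  simp only [coeff_C_mul_X_pow, Finset.sum_ite_eq, Finset.mem_range, Nat.lt_succ_of_le hk,
    if_true]

variable {K : Type*} [Field K] [CharZero K]

theorem linearMap_eq_zero_of_forall_X_add_C_pow {d : ℕ} (L : K[X] →ₗ[K] K)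
    (hL : ∀ s : K, L ((X + C s) ^ d) = 0) {p : K[X]} (hp : p.natDegree ≤ d) : L p = 0 := by
  -- `L ((X + C s) ^ d)` is the value at `s` of the polynomial `Q`.
  set Q : K[X] := ∑ m ∈ range (d + 1), C (d.choose m * L (X ^ (d - m))) * X ^ m
  have hQ : Q = 0 := by
    refine Polynomial.funext fun s => ?_
    rw [eval_zero, ← hL s, add_comm, add_pow, map_sum, eval_finsetSum]
    refine Finset.sum_congr rfl fun m _ => ?_
    have hterm : C s ^ m * X ^ (d - m) * (d.choose m : K[X]) =
        (s ^ m * d.choose m) • X ^ (d - m) := by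
      rw [smul_eq_C_mul, C_mul, C_pow, C_eq_natCast]
      ring
    rw [hterm, map_smul, smul_eq_mul, eval_C_mul, eval_X_pow]
    ring
  have hX : ∀ k ≤ d, L (X ^ k) = 0 := by
    intro k hk
    have hcoeff := congrArg (coeff · (d - k)) hQ
    simp only [Q, finsetSum_coeff, coeff_C_mul_X_pow, Finset.sum_ite_eq, Finset.mem_range,
      coeff_zero, Nat.sub_sub_self hk, if_pos (Nat.lt_succ_of_le (Nat.sub_le d k))] at hcoeff
    exact (mul_eq_zero.mp hcoeff).resolve_left
      (Nat.cast_ne_zero.mpr (Nat.choose_pos (Nat.sub_le d k)).ne')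
  rw [p.as_sum_range' (d + 1) (Nat.lt_succ_of_le hp), map_sum]
  refine Finset.sum_eq_zero fun k hk => ?_
  rw [← C_mul_X_pow_eq_monomial, ← smul_eq_C_mul, map_smul,
    hX k (Nat.le_of_lt_succ (Finset.mem_range.mp hk)), smul_zero]

theorem bilin_eq_of_forall_X_add_C_pow {d : ℕ} (B B' : K[X] →ₗ[K] K[X] →ₗ[K] K)
    (h : ∀ s t : K, B ((X + C s) ^ d) ((X + C t) ^ d) = B' ((X + C s) ^ d) ((X + C t) ^ d))
    {p q : K[X]} (hp : p.natDegree ≤ d) (hq : q.natDegree ≤ d) : B p q = B' p q := by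
  have hq' (s : K) : B ((X + C s) ^ d) q = B' ((X + C s) ^ d) q :=
    sub_eq_zero.mp <| linearMap_eq_zero_of_forall_X_add_C_pow (B _ - B' _)
      (fun t => sub_eq_zero.mpr (h s t)) hq
  exact sub_eq_zero.mp <| linearMap_eq_zero_of_forall_X_add_C_pow ((B - B').flip q)
    (fun s => sub_eq_zero.mpr (hq' s)) hp

end Polynomial

noncomputable def pairingBilin (d : ℕ) : ℂ[X] →ₗ[ℂ] ℂ[X] →ₗ[ℂ] ℂ :=
  LinearMap.mk₂ ℂ (pairing d)
    (fun p p' q => by simp only [pairing, coeff_add, mul_add, add_mul, Finset.sum_add_distrib])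
    (fun c p q => by
      simp only [pairing, coeff_smul, smul_eq_mul, Finset.mul_sum]
      exact Finset.sum_congr rfl fun _ _ => by ring)
    (fun p q q' => by simp only [pairing, coeff_add, mul_add, Finset.sum_add_distrib])
    (fun c p q => by
      simp only [pairing, coeff_smul, smul_eq_mul, Finset.mul_sum]
      exact Finset.sum_congr rfl fun _ _ => by ring)

noncomputable def symActLinearMap (d : ℕ) (γ : SL2Z) : ℂ[X] →ₗ[ℂ] ℂ[X] where
  toFun := symAct d γ
  map_add' p q := by simp only [symAct, coeff_add, C_add, add_mul, Finset.sum_add_distrib]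
  map_smul' c p := by
    rw [RingHom.id_apply, symAct, symAct, Finset.smul_sum]
    refine Finset.sum_congr rfl fun i _ => ?_
    rw [coeff_smul, smul_eq_mul, C_mul, smul_eq_C_mul, mul_assoc]

theorem pairing_C_mul_X_add_C_pow (d : ℕ) (u v u' v' : ℂ) :
    pairing d ((C u * X + C v) ^ d) ((C u' * X + C v') ^ d) = (v * u' - u * v') ^ d := by
  rw [pairing, sub_eq_neg_add]
  conv_rhs => rw [add_pow]
  refine Finset.sum_congr rfl fun i hi => ?_
  have hi : i ≤ d := Nat.le_of_lt_succ (Finset.mem_range.mp hi)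
  rw [coeff_C_mul_X_add_C_pow u v hi, coeff_C_mul_X_add_C_pow u' v' (Nat.sub_le d i),
    Nat.choose_symm hi, Nat.sub_sub_self hi]
  field_simp
  ring

theorem symAct_C_mul_X_add_C_pow (d : ℕ) (γ : SL2Z) (u v : ℂ) :
    symAct d γ ((C u * X + C v) ^ d) =
      (C (u * (γ.1 1 1 : ℂ) - v * (γ.1 1 0 : ℂ)) * X +
        C (v * (γ.1 0 0 : ℂ) - u * (γ.1 0 1 : ℂ))) ^ d := by
  have hlin : C (u * (γ.1 1 1 : ℂ) - v * (γ.1 1 0 : ℂ)) * X +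
      C (v * (γ.1 0 0 : ℂ) - u * (γ.1 0 1 : ℂ)) =
      C u * (C (γ.1 1 1 : ℂ) * X - C (γ.1 0 1 : ℂ)) +
        C v * (C (γ.1 0 0 : ℂ) - C (γ.1 1 0 : ℂ) * X) := by
    simp only [C_sub, C_mul]
    ring
  rw [hlin, symAct]
  conv_rhs => rw [add_pow]
  refine Finset.sum_congr rfl fun i hi => ?_
  rw [coeff_C_mul_X_add_C_pow u v (Nat.le_of_lt_succ (Finset.mem_range.mp hi)), mul_pow, mul_pow,
    C_mul, C_mul, C_pow, C_pow, C_eq_natCast]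
  ring

theorem SL2Z.det_fin_two_complex (γ : SL2Z) :
    (γ.1 0 0 : ℂ) * γ 1 1 - γ 0 1 * γ 1 0 = 1 := by
  have h := congrArg (Int.cast : ℤ → ℂ) γ.det_coe
  rwa [Matrix.det_fin_two, Int.cast_sub, Int.cast_mul, Int.cast_mul, Int.cast_one] at h

theorem pairing_symAct_invariant (d : ℕ) (γ : SL2Z) (p q : Polynomial ℂ)
    (hp : p.natDegree ≤ d) (hq : q.natDegree ≤ d) :
    pairing d (symAct d γ p) (symAct d γ q) = pairing d p q := by
  refine bilin_eq_of_forall_X_add_C_pow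
    ((pairingBilin d).compl₁₂ (symActLinearMap d γ) (symActLinearMap d γ)) (pairingBilin d)
    (fun s t => ?_) hp hq
  have hX (r : ℂ) : (X + C r : ℂ[X]) = C 1 * X + C r := by rw [C_1, one_mul]
  change pairing d (symAct d γ _) (symAct d γ _) = pairing d _ _
  rw [hX, hX, symAct_C_mul_X_add_C_pow, symAct_C_mul_X_add_C_pow, pairing_C_mul_X_add_C_pow,
    pairing_C_mul_X_add_C_pow]
  congr 1
  linear_combination (s - t) * SL2Z.det_fin_two_complex γ
end

section
/- For every integer d ≥ 1, the sum Σ_{j=0}^{d} binom(d,j)^{-1} is at most 2 + 4/d. -/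
/-!
The four outer terms `j = 0, 1, d - 1, d` contribute `2 + 2 / d`. Every other term is at most
`1 / binom(d, 2) = 2 / (d (d - 1))`, because the binomial coefficients increase up to the middle
and are symmetric; as there are `d - 3` of them, they contribute less than `2 / d`.
-/

theorem Nat.choose_le_choose_right_of_le_half {n a b : ℕ} (hab : a ≤ b) (hb : b ≤ n / 2) :
    n.choose a ≤ n.choose b := by
  induction b, hab using Nat.le_induction with
  | base => rfl
  | succ b _ ih => exact (ih (by omega)).trans (Nat.choose_le_succ_of_lt_half_left (by omega))

theorem Nat.choose_le_choose_of_le_of_le_sub {n a b : ℕ} (hab : a ≤ b) (hb : b ≤ n - a) :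
    n.choose a ≤ n.choose b := by
  rcases le_or_gt b (n / 2) with hb_half | hb_half
  · exact Nat.choose_le_choose_right_of_le_half hab hb_half
  · rw [← Nat.choose_symm (by omega : b ≤ n)]
    exact Nat.choose_le_choose_right_of_le_half (by omega) (by omega)

theorem inv_choose_le_of_two_le {K : Type*} [Field K] [LinearOrder K] [IsStrictOrderedRing K]
    {n j : ℕ} (hj₁ : 2 ≤ j) (hj₂ : j ≤ n - 2) :
    (n.choose j : K)⁻¹ ≤ 2 / (n * (n - 1)) := by
  have hpos : 0 < n.choose 2 := Nat.choose_pos (by omega)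
  calc (n.choose j : K)⁻¹ ≤ (n.choose 2 : K)⁻¹ :=
        inv_anti₀ (by exact_mod_cast hpos)
          (by exact_mod_cast Nat.choose_le_choose_of_le_of_le_sub hj₁ hj₂)
    _ = 2 / (n * (n - 1)) := by rw [Nat.cast_choose_two, inv_div]

theorem sum_inv_choose_le_general (d : ℕ) :
    ∑ j ∈ Finset.range (d + 1), ((d.choose j : ℝ))⁻¹ ≤ 2 + 4 / (d : ℝ) := by
  match d with
  | 0 | 1 | 2 => norm_num [Finset.sum_range_succ]
  | m + 3 =>
    rw [Finset.sum_range_succ, Finset.sum_range_succ, Finset.sum_range_succ',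
      Finset.sum_range_succ']
    have hmiddle :
        ∑ i ∈ Finset.range m, ((m + 3).choose (i + 1 + 1) : ℝ)⁻¹ ≤ 2 / (m + 3 : ℕ) := by
      calc _ ≤ ∑ _i ∈ Finset.range m, (2 / ((m + 3 : ℕ) * ((m + 3 : ℕ) - 1)) : ℝ) :=
            Finset.sum_le_sum fun i hi =>
              inv_choose_le_of_two_le (by omega) (by rw [Finset.mem_range] at hi; omega)
        _ ≤ 2 / (m + 3 : ℕ) := by
          have hpred : (0 : ℝ) < (m + 3 : ℕ) - 1 := by push_cast; linarith
          rw [Finset.sum_const, Finset.card_range, nsmul_eq_mul, ← mul_div_assoc,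
            div_le_div_iff₀ (by positivity) (by positivity)]
          push_cast at hpred ⊢
          nlinarith
    simp only [zero_add, Nat.choose_zero_right, Nat.choose_one_right, Nat.choose_succ_self_right,
      Nat.choose_self, Nat.cast_one, inv_one]
    push_cast at hmiddle ⊢
    have h4 : (4 : ℝ) / (m + 3) = 2 / (m + 3) + 2 * ((m : ℝ) + 3)⁻¹ := by ring
    rw [show (m : ℝ) + 2 + 1 = m + 3 by ring]
    linarith

theorem sum_inv_choose_le (d : ℕ) (hd : 1 ≤ d) :
    ∑ j ∈ Finset.range (d + 1), ((d.choose j : ℝ))⁻¹ ≤ 2 + 4 / (d : ℝ) :=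
  sum_inv_choose_le_general d
end

section
/- In the double quotient (1+S)\ℂ[SL(2,ℤ)/±I]/(1+S) of the group ring of SL(2,ℤ), the element T⁻¹ - 1 + T is congruent to -(1 + U + U⁻¹), where U = TS. More precisely, there exist elements A, B ∈ ℂ[SL(2,ℤ)] such that T⁻¹ - 1 + T + U⁻¹ + 1 + U = (1+S)·A + B·(1+S) in ℂ[SL(2,ℤ)/±I]. -/
def pmSub : Subgroup SL2Z := Subgroup.zpowers (-1)

instance pmSub_normal : pmSub.Normal := by
  constructor
  intro n hn g
  obtain ⟨k, rfl⟩ := hn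
  have hc : Commute g (-1 : SL2Z) := by
    show g * (-1) = (-1) * g
    apply Subtype.ext
    show (g : Matrix (Fin 2) (Fin 2) ℤ) * (((-1 : SL2Z) : Matrix (Fin 2) (Fin 2) ℤ))
        = (((-1 : SL2Z) : Matrix (Fin 2) (Fin 2) ℤ)) * (g : Matrix (Fin 2) (Fin 2) ℤ)
    simp
  have h2 : g * (-1 : SL2Z) ^ k * g⁻¹ = (-1 : SL2Z) ^ k := by
    rw [(hc.zpow_right k).eq]
    exact mul_inv_cancel_right _ _
  rw [h2]
  exact Subgroup.zpow_mem_zpowers _ _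

noncomputable def toQuot : MonoidAlgebra ℂ SL2Z →+* MonoidAlgebra ℂ (SL2Z ⧸ pmSub) :=
  MonoidAlgebra.mapDomainRingHom ℂ (QuotientGroup.mk' pmSub)

/-! Modulo `±I` the generator `S` is an involution, so `U⁻¹ = S⁻¹ T⁻¹` becomes `S T⁻¹` and
the left-hand side is `T⁻¹ + T + S T⁻¹ + T S = (1 + S) T⁻¹ + T (1 + S)`. -/

open MonoidAlgebra ModularGroup

theorem MonoidAlgebra.mapDomainRingHom_of {k G H : Type*} [Semiring k] [Monoid G] [Monoid H]
    (f : G →* H) (g : G) : mapDomainRingHom k f (of k G g) = of k H (f g) := by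
  simp only [mapDomainRingHom_apply, of_apply, mapDomain_single]

lemma toQuot_of (g : SL2Z) : toQuot (of ℂ SL2Z g) = of ℂ (SL2Z ⧸ pmSub) g :=
  mapDomainRingHom_of _ g

lemma neg_one_mem_pmSub : (-1 : SL2Z) ∈ pmSub :=
  Subgroup.mem_zpowers _

lemma pmSub_mk_neg (g : SL2Z) : ((-g : SL2Z) : SL2Z ⧸ pmSub) = g := by
  rw [← neg_one_mul, QuotientGroup.mk_mul,
    (QuotientGroup.eq_one_iff _).mpr neg_one_mem_pmSub, one_mul]

lemma toQuot_of_inv_T_mul_S :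
    toQuot (of ℂ SL2Z (T * S)⁻¹) = toQuot (of ℂ SL2Z S * of ℂ SL2Z T⁻¹) := by
  rw [← map_mul, toQuot_of, toQuot_of, mul_inv_rev, S_inv, neg_mul, pmSub_mk_neg]

theorem groupRing_double_coset_identity :
    ∃ A B : MonoidAlgebra ℂ SL2Z,
      toQuot ((MonoidAlgebra.of ℂ SL2Z) ModularGroup.T⁻¹ - 1
          + (MonoidAlgebra.of ℂ SL2Z) ModularGroup.T
          + (MonoidAlgebra.of ℂ SL2Z) (ModularGroup.T * ModularGroup.S)⁻¹ + 1
          + (MonoidAlgebra.of ℂ SL2Z) (ModularGroup.T * ModularGroup.S))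
        = toQuot ((1 + (MonoidAlgebra.of ℂ SL2Z) ModularGroup.S) * A
            + B * (1 + (MonoidAlgebra.of ℂ SL2Z) ModularGroup.S)) := by
  refine ⟨of ℂ SL2Z T⁻¹, of ℂ SL2Z T, ?_⟩
  calc _ = toQuot (of ℂ SL2Z T⁻¹ - 1 + of ℂ SL2Z T + of ℂ SL2Z S * of ℂ SL2Z T⁻¹ + 1
          + of ℂ SL2Z T * of ℂ SL2Z S) := by
        simp only [map_add, map_sub, toQuot_of_inv_T_mul_S, ← map_mul]
    _ = _ := by congr 1; noncomm_ring
end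

section
/- Let d ≥ 0 be even and e = X^d - 1 ∈ ℂ[X]_d. Then (1+S).e = 0 and (1+U+U²).e = 0 under the sym^d(X)-action (so e ∈ W_d), and ⟨⟨e, q⟩⟩ = 0 for every q ∈ W_d, where W_d = {v ∈ ℂ[X]_d : (1+S).v = 0 and (1+U+U²).v = 0}. -/
open Polynomial Finset MeasureTheory

/-! For `q ∈ W_d`, evaluating the relation for `S` at `X = 0, 1` and the one for `U` at `X = 0` forces
`q(1) = q(-1) = 0`. On the other hand `(T⁻¹ - T).e = (X + 1)^d - (X - 1)^d`, and the weights
`binom(d,i)⁻¹` of the pairing cancel the binomial coefficients, so that `⟨(X + a)^d, q⟩ = (-1)^d q(-a)`.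
Hence `⟨⟨e, q⟩⟩ = q(-1) - q(1) = 0`. -/

section Homogenize

variable {R K : Type*} [CommRing R] [Field K] {d : ℕ}

lemma neg_one_pow_sub_mul_pow (a : R) {i : ℕ} (hi : i ≤ d) :
    (-1) ^ (d - i) * a ^ i = (-1) ^ d * (-a) ^ i := by
  have hd : d + i = d - i + 2 * i := by omega
  rw [neg_pow a, ← mul_assoc, ← pow_add, hd, pow_add, pow_mul, neg_one_sq, one_pow, mul_one]

lemma sum_coeff_mul_pow_mul_pow_of_ne_zero {q : K[X]} (hq : q.natDegree ≤ d) (u : K) {v : K}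
    (hv : v ≠ 0) :
    ∑ i ∈ Finset.range (d + 1), q.coeff i * (u ^ i * v ^ (d - i)) = v ^ d * q.eval (u / v) := by
  rw [eval_eq_sum_range' (Nat.lt_succ_of_le hq), Finset.mul_sum]
  refine Finset.sum_congr rfl fun i hi => ?_
  rw [pow_sub₀ v hv (Nat.lt_succ_iff.mp (Finset.mem_range.mp hi)), div_pow]
  field_simp

lemma sum_coeff_mul_pow_mul_zero_pow (q : R[X]) (u : R) :
    ∑ i ∈ Finset.range (d + 1), q.coeff i * (u ^ i * 0 ^ (d - i)) = q.coeff d * u ^ d := by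
  rw [Finset.sum_eq_single_of_mem d (Finset.self_mem_range_succ d)]
  · simp
  · intro i hi hid
    rw [zero_pow (by simp at hi; omega), mul_zero, mul_zero]

end Homogenize

section SymAct

variable (d : ℕ) (γ : SL2Z)

lemma symAct_sub (p q : ℂ[X]) : symAct d γ (p - q) = symAct d γ p - symAct d γ q := by
  simp only [symAct, coeff_sub, C_sub, sub_mul, Finset.sum_sub_distrib]

lemma symAct_X_pow {k : ℕ} (hk : k ≤ d) :
    symAct d γ (X ^ k) = (C ((γ.1 1 1 : ℤ) : ℂ) * X - C ((γ.1 0 1 : ℤ) : ℂ)) ^ k *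
      (C ((γ.1 0 0 : ℤ) : ℂ) - C ((γ.1 1 0 : ℤ) : ℂ) * X) ^ (d - k) := by
  rw [symAct, Finset.sum_eq_single_of_mem k (Finset.mem_range.mpr (Nat.lt_succ_of_le hk))]
  · simp
  · intro i _ hik
    simp [coeff_X_pow, hik]

lemma symAct_X_pow_sub_one :
    symAct d γ (X ^ d - 1) = (C ((γ.1 1 1 : ℤ) : ℂ) * X - C ((γ.1 0 1 : ℤ) : ℂ)) ^ d -
      (C ((γ.1 0 0 : ℤ) : ℂ) - C ((γ.1 1 0 : ℤ) : ℂ) * X) ^ d := by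
  rw [← pow_zero (X : ℂ[X]), symAct_sub, symAct_X_pow d γ le_rfl, symAct_X_pow d γ (Nat.zero_le d)]
  simp

lemma eval_symAct (q : ℂ[X]) (x : ℂ) :
    (symAct d γ q).eval x = ∑ i ∈ Finset.range (d + 1), q.coeff i *
      (((γ.1 1 1 : ℤ) * x - (γ.1 0 1 : ℤ)) ^ i * ((γ.1 0 0 : ℤ) - (γ.1 1 0 : ℤ) * x) ^ (d - i)) := by
  simp [symAct, eval_finsetSum]

end SymAct

lemma coe_TS : (ModularGroup.T * ModularGroup.S).1 = !![1, -1; 1, 0] := by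
  simp [Matrix.SpecialLinearGroup.coe_mul, ModularGroup.coe_S, ModularGroup.coe_T]

lemma coe_TS_mul_TS :
    ((ModularGroup.T * ModularGroup.S) * (ModularGroup.T * ModularGroup.S)).1 = !![0, -1; 1, -1] := by
  rw [Matrix.SpecialLinearGroup.coe_mul, coe_TS, Matrix.mul_fin_two]
  norm_num

section Pairing

variable {d : ℕ}

lemma pairing_sub_left (p₁ p₂ q : ℂ[X]) :
    pairing d (p₁ - p₂) q = pairing d p₁ q - pairing d p₂ q := by
  simp only [pairing, coeff_sub, mul_sub, sub_mul, Finset.sum_sub_distrib]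

lemma pairing_X_add_C_pow {q : ℂ[X]} (hq : q.natDegree ≤ d) (a : ℂ) :
    pairing d ((X + C a) ^ d) q = (-1) ^ d * q.eval (-a) := by
  rw [eval_eq_sum_range' (Nat.lt_succ_of_le hq), Finset.mul_sum, pairing,
    ← Finset.sum_range_reflect _ (d + 1)]
  refine Finset.sum_congr rfl fun i hi => ?_
  have hi : i ≤ d := Nat.lt_succ_iff.mp (Finset.mem_range.mp hi)
  have hchoose : (d.choose (d - i) : ℂ) ≠ 0 := Nat.cast_ne_zero.mpr (Nat.choose_ne_zero (by omega))
  rw [coeff_X_add_C_pow, Nat.add_sub_cancel, Nat.sub_sub_self hi]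
  calc (-1) ^ (d - i) * (d.choose (d - i) : ℂ)⁻¹ * (a ^ i * d.choose (d - i)) * q.coeff i
      = (-1) ^ (d - i) * a ^ i * q.coeff i := by field_simp
    _ = (-1) ^ d * (q.coeff i * (-a) ^ i) := by
      rw [neg_one_pow_sub_mul_pow a hi]; ring

end Pairing

section Invariants

variable {d : ℕ} {q : ℂ[X]}

lemma eval_one_symAct_S (hd : Even d) (hq : q.natDegree ≤ d) :
    (symAct d ModularGroup.S q).eval 1 = q.eval (-1) := by
  rw [eval_symAct, sum_coeff_mul_pow_mul_pow_of_ne_zero hq _ (by simp [ModularGroup.coe_S])]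
  simp [ModularGroup.coe_S, hd.neg_one_pow]

lemma eval_zero_symAct_S (q : ℂ[X]) : (symAct d ModularGroup.S q).eval 0 = q.coeff d := by
  rw [eval_symAct]
  simpa [ModularGroup.coe_S] using sum_coeff_mul_pow_mul_zero_pow q (1 : ℂ)

lemma eval_zero_symAct_TS (hq : q.natDegree ≤ d) :
    (symAct d (ModularGroup.T * ModularGroup.S) q).eval 0 = q.eval 1 := by
  rw [eval_symAct, sum_coeff_mul_pow_mul_pow_of_ne_zero hq _ (by simp)]
  simp

lemma eval_zero_symAct_TS_mul_TS (q : ℂ[X]) :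
    (symAct d ((ModularGroup.T * ModularGroup.S) * (ModularGroup.T * ModularGroup.S)) q).eval 0 =
      q.coeff d := by
  rw [eval_symAct]
  simpa [coe_TS_mul_TS] using sum_coeff_mul_pow_mul_zero_pow q (1 : ℂ)

lemma eval_one_eq_zero_and_eval_neg_one_eq_zero (hd : Even d) (hq : q.natDegree ≤ d)
    (hS : q + symAct d ModularGroup.S q = 0)
    (hU : q + symAct d (ModularGroup.T * ModularGroup.S) q
      + symAct d ((ModularGroup.T * ModularGroup.S) * (ModularGroup.T * ModularGroup.S)) q = 0) :
    q.eval 1 = 0 ∧ q.eval (-1) = 0 := by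
  have hS0 := congrArg (eval 0) hS
  have hS1 := congrArg (eval 1) hS
  have hU0 := congrArg (eval 0) hU
  simp only [eval_add, eval_zero, eval_zero_symAct_S, eval_one_symAct_S hd hq,
    eval_zero_symAct_TS hq, eval_zero_symAct_TS_mul_TS] at hS0 hS1 hU0
  have h1 : q.eval 1 = 0 := by linear_combination hU0 - hS0
  exact ⟨h1, by linear_combination hS1 - h1⟩

end Invariants

theorem e_in_W_and_orthogonal (d : ℕ) (hd : Even d) :
    ((Polynomial.X ^ d - 1 : Polynomial ℂ)
        + symAct d ModularGroup.S (Polynomial.X ^ d - 1) = 0) ∧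
    ((Polynomial.X ^ d - 1 : Polynomial ℂ)
        + symAct d (ModularGroup.T * ModularGroup.S) (Polynomial.X ^ d - 1)
        + symAct d ((ModularGroup.T * ModularGroup.S) * (ModularGroup.T * ModularGroup.S))
            (Polynomial.X ^ d - 1) = 0) ∧
    (∀ q : Polynomial ℂ, q.natDegree ≤ d →
      q + symAct d ModularGroup.S q = 0 →
      q + symAct d (ModularGroup.T * ModularGroup.S) q
        + symAct d ((ModularGroup.T * ModularGroup.S) * (ModularGroup.T * ModularGroup.S)) q = 0 →
      pairing d
        (symAct d ModularGroup.T⁻¹ (Polynomial.X ^ d - 1)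
          - symAct d ModularGroup.T (Polynomial.X ^ d - 1)) q = 0) := by
  refine ⟨?_, ?_, fun q hq hS hU => ?_⟩
  · rw [symAct_X_pow_sub_one, ModularGroup.coe_S]
    simp [hd.neg_pow]
  · rw [symAct_X_pow_sub_one, symAct_X_pow_sub_one, coe_TS, coe_TS_mul_TS]
    simp [hd.neg_pow]
    ring
  · have hT : symAct d ModularGroup.T⁻¹ (X ^ d - 1) - symAct d ModularGroup.T (X ^ d - 1)
        = (X + C 1) ^ d - (X + C (-1)) ^ d := by
      rw [symAct_X_pow_sub_one, symAct_X_pow_sub_one, ModularGroup.coe_T_inv, ModularGroup.coe_T]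
      simp [sub_eq_add_neg]
    obtain ⟨h1, hneg1⟩ := eval_one_eq_zero_and_eval_neg_one_eq_zero hd hq hS hU
    rw [hT, pairing_sub_left, pairing_X_add_C_pow hq, pairing_X_add_C_pow hq, neg_neg, h1, hneg1]
    ring
end

section
/- Let ψ : SL(2,ℤ) → ℂ satisfy ψ(γ₁γ₂) = ψ(γ₁) + ψ(γ₂) + φ₂^∨(γ₁)(φ₁(γ₂)) for parabolic (1, sym^d(X))-cocycles φ₁, φ₂, and set δ_{-1} = I, δ_i = T^{β_i} S δ_{i-1} for a sequence of integers β_0, …, β_l. Then ψ(δ_l) = Σ_{i=0}^{l} φ₂^∨(S)(φ₁(δ_{i-1}) - ½φ₁(S)), where φ₂^∨(S)(v) = ⟨φ₂(S⁻¹), v⟩. -/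
open Polynomial Finset MeasureTheory

/-! Since `ψ` and `φ₂` vanish on powers of `T`, left multiplication by `T ^ β` does not change `ψ`,
so `ψ (T ^ β * S * γ) = ψ γ + ψ S + ⟨φ₂ S⁻¹, φ₁ γ⟩`. Along the continued fraction this says that
consecutive values `ψ (δ i) - ψ (δ (i - 1))` are the summands, and the sum telescopes. -/

lemma symAct_zero (d : ℕ) (γ : SL2Z) : symAct d γ 0 = 0 := by
  simp [symAct]

lemma symAct_one {d : ℕ} {p : ℂ[X]} (hp : p.natDegree ≤ d) : symAct d 1 p = p := by
  conv_rhs => rw [p.as_sum_range' (d + 1) (Nat.lt_succ_of_le hp)]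
  refine Finset.sum_congr rfl fun i _ => ?_
  simp [C_mul_X_pow_eq_monomial]

lemma pairing_zero_left (d : ℕ) (q : ℂ[X]) : pairing d 0 q = 0 := by
  simp [pairing]

lemma pairing_zero_right (d : ℕ) (p : ℂ[X]) : pairing d p 0 = 0 := by
  simp [pairing]

lemma pairing_sub_smul_right (d : ℕ) (p q r : ℂ[X]) (c : ℂ) :
    pairing d p (q - c • r) = pairing d p q - c * pairing d p r := by
  simp only [pairing, coeff_sub, coeff_smul, smul_eq_mul, Finset.mul_sum, ← Finset.sum_sub_distrib]
  exact Finset.sum_congr rfl fun i _ => by ring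

namespace IsParabolicCocycle

variable {d : ℕ} {φ : SL2Z → ℂ[X]}

lemma map_one (h : IsParabolicCocycle d φ) : φ 1 = 0 := by
  have h11 := h.2.1 1 1
  rwa [one_mul, symAct_one (h.1 1), right_eq_add] at h11

lemma map_T_zpow (h : IsParabolicCocycle d φ) (n : ℤ) : φ (ModularGroup.T ^ n) = 0 := by
  induction n using Int.induction_on with
  | zero => simpa using h.map_one
  | succ k ih => rw [zpow_add_one, h.2.1, h.2.2.1, symAct_zero, ih, add_zero]
  | pred k ih =>
    have hk := h.2.1 (ModularGroup.T ^ (-(k : ℤ) - 1)) ModularGroup.T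
    rwa [← zpow_add_one, sub_add_cancel, ih, h.2.2.1, symAct_zero, zero_add, eq_comm] at hk

end IsParabolicCocycle

section TwistedHom

variable {d : ℕ} {φ₁ φ₂ : SL2Z → ℂ[X]} {ψ : SL2Z → ℂ}

lemma psi_one (h₂ : IsParabolicCocycle d φ₂)
    (hψ : ∀ γ₁ γ₂ : SL2Z, ψ (γ₁ * γ₂) = ψ γ₁ + ψ γ₂ + pairing d (φ₂ γ₁⁻¹) (φ₁ γ₂)) :
    ψ 1 = 0 := by
  have h11 := hψ 1 1
  rwa [one_mul, inv_one, h₂.map_one, pairing_zero_left, add_zero, right_eq_add] at h11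

lemma psi_T_zpow (hφ₁T : φ₁ ModularGroup.T = 0) (h₂ : IsParabolicCocycle d φ₂)
    (hψ : ∀ γ₁ γ₂ : SL2Z, ψ (γ₁ * γ₂) = ψ γ₁ + ψ γ₂ + pairing d (φ₂ γ₁⁻¹) (φ₁ γ₂))
    (hT : ψ ModularGroup.T = 0) (n : ℤ) : ψ (ModularGroup.T ^ n) = 0 := by
  have hmul_T : ∀ k : ℤ, ψ (ModularGroup.T ^ (k + 1)) = ψ (ModularGroup.T ^ k) := fun k => by
    rw [zpow_add_one, hψ, hT, hφ₁T, pairing_zero_right, add_zero, add_zero]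
  induction n using Int.induction_on with
  | zero => simpa using psi_one h₂ hψ
  | succ k ih => rw [hmul_T, ih]
  | pred k ih => rwa [← hmul_T, sub_add_cancel]

lemma psi_T_zpow_mul (hφ₁T : φ₁ ModularGroup.T = 0) (h₂ : IsParabolicCocycle d φ₂)
    (hψ : ∀ γ₁ γ₂ : SL2Z, ψ (γ₁ * γ₂) = ψ γ₁ + ψ γ₂ + pairing d (φ₂ γ₁⁻¹) (φ₁ γ₂))
    (hT : ψ ModularGroup.T = 0) (n : ℤ) (γ : SL2Z) :
    ψ (ModularGroup.T ^ n * γ) = ψ γ := by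
  rw [hψ, psi_T_zpow hφ₁T h₂ hψ hT, ← zpow_neg, h₂.map_T_zpow, pairing_zero_left, zero_add,
    add_zero]

lemma psi_T_zpow_mul_S_mul (hφ₁T : φ₁ ModularGroup.T = 0) (h₂ : IsParabolicCocycle d φ₂)
    (hψ : ∀ γ₁ γ₂ : SL2Z, ψ (γ₁ * γ₂) = ψ γ₁ + ψ γ₂ + pairing d (φ₂ γ₁⁻¹) (φ₁ γ₂))
    (hT : ψ ModularGroup.T = 0)
    (hS : ψ ModularGroup.S
      = -(1/2 : ℂ) * pairing d (φ₂ ModularGroup.S⁻¹) (φ₁ ModularGroup.S))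
    (n : ℤ) (γ : SL2Z) :
    ψ (ModularGroup.T ^ n * ModularGroup.S * γ)
      = ψ γ + pairing d (φ₂ ModularGroup.S⁻¹) (φ₁ γ - (2 : ℂ)⁻¹ • φ₁ ModularGroup.S) := by
  rw [mul_assoc, psi_T_zpow_mul hφ₁T h₂ hψ hT, hψ, hS, pairing_sub_smul_right]
  ring

end TwistedHom

theorem psi_continued_fraction_sum_general (d : ℕ) (φ₁ φ₂ : SL2Z → Polynomial ℂ)
    (h1 : IsParabolicCocycle d φ₁) (h2 : IsParabolicCocycle d φ₂) (ψ : SL2Z → ℂ)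
    (hψ : ∀ γ₁ γ₂ : SL2Z, ψ (γ₁ * γ₂) = ψ γ₁ + ψ γ₂ + pairing d (φ₂ γ₁⁻¹) (φ₁ γ₂))
    (hT : ψ ModularGroup.T = 0)
    (hS : ψ ModularGroup.S
      = -(1/2 : ℂ) * pairing d (φ₂ ModularGroup.S⁻¹) (φ₁ ModularGroup.S))
    (l : ℕ) (β : ℕ → ℤ) (δ : ℕ → SL2Z)
    (hδ0 : δ 0 = ModularGroup.T ^ (β 0) * ModularGroup.S)
    (hδ : ∀ i, 1 ≤ i → i ≤ l → δ i = ModularGroup.T ^ (β i) * ModularGroup.S * δ (i - 1)) :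
    ψ (δ l) = ∑ i ∈ Finset.range (l + 1),
      pairing d (φ₂ ModularGroup.S⁻¹)
        ((if i = 0 then 0 else φ₁ (δ (i - 1))) - (2 : ℂ)⁻¹ • φ₁ ModularGroup.S) := by
  let ψPrev : ℕ → ℂ := fun i => if i = 0 then 0 else ψ (δ (i - 1))
  have hstep : ∀ i ≤ l, ψPrev (i + 1) - ψPrev i = pairing d (φ₂ ModularGroup.S⁻¹)
      ((if i = 0 then 0 else φ₁ (δ (i - 1))) - (2 : ℂ)⁻¹ • φ₁ ModularGroup.S) := by
    rintro (_ | i) hi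
    · simp only [ψPrev, if_pos, if_neg (Nat.succ_ne_zero 0), Nat.add_sub_cancel, sub_zero]
      rw [hδ0, ← mul_one (ModularGroup.T ^ β 0 * ModularGroup.S),
        psi_T_zpow_mul_S_mul h1.2.2.1 h2 hψ hT hS, psi_one h2 hψ, h1.map_one, zero_add]
    · simp [ψPrev, hδ (i + 1) (by omega) hi, psi_T_zpow_mul_S_mul h1.2.2.1 h2 hψ hT hS]
  calc ψ (δ l) = ∑ i ∈ Finset.range (l + 1), (ψPrev (i + 1) - ψPrev i) := by
        rw [Finset.sum_range_sub]
        simp [ψPrev]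
    _ = _ := Finset.sum_congr rfl fun i hi => hstep i (Nat.lt_succ_iff.mp (Finset.mem_range.mp hi))

theorem psi_continued_fraction_sum (d : ℕ) (hd : Even d) (φ₁ φ₂ : SL2Z → Polynomial ℂ)
    (h1 : IsParabolicCocycle d φ₁) (h2 : IsParabolicCocycle d φ₂) (ψ : SL2Z → ℂ)
    (hψ : ∀ γ₁ γ₂ : SL2Z, ψ (γ₁ * γ₂) = ψ γ₁ + ψ γ₂ + pairing d (φ₂ γ₁⁻¹) (φ₁ γ₂))
    (hT : ψ ModularGroup.T = 0)
    (hS : ψ ModularGroup.S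
      = -(1/2 : ℂ) * pairing d (φ₂ ModularGroup.S⁻¹) (φ₁ ModularGroup.S))
    (l : ℕ) (β : ℕ → ℤ) (δ : ℕ → SL2Z)
    (hδ0 : δ 0 = ModularGroup.T ^ (β 0) * ModularGroup.S)
    (hδ : ∀ i, 1 ≤ i → i ≤ l → δ i = ModularGroup.T ^ (β i) * ModularGroup.S * δ (i - 1)) :
    ψ (δ l) = ∑ i ∈ Finset.range (l + 1),
      pairing d (φ₂ ModularGroup.S⁻¹)
        ((if i = 0 then 0 else φ₁ (δ (i - 1))) - (2 : ℂ)⁻¹ • φ₁ ModularGroup.S) :=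
  psi_continued_fraction_sum_general d φ₁ φ₂ h1 h2 ψ hψ hT hS l β δ hδ0 hδ
end
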